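/- arXiv:2204.13012 — 2 statements merged into one kernel-verified Lean document; each statement's English description precedes it below -/
import Mathlib

section
/- For every q ∈ [1,∞) there exists a continuous function f : (0,1) → [0,∞) such that ∫_0^1 ε^{qs} f(ε)^q dε/ε < ∞ for some s ∈ ℝ, while ∫_0^1 ε^{qs} f(ε)^{2q} dε/ε = ∞ for every s ∈ ℝ. (For instance, for n ≥ 4 set f(ε) = n^{−2} e^{n/q} on [n^{−1} − e^{−n}/2, n^{−1} + e^{−n}/2], extend linearly to vanish at the endpoints of [n^{−1} − e^{−n}, n^{−1} + e^{−n}], and set f = 0 elsewhere.) Consequently, viewing f as a net of constant functions, (f_ε) is L^q-moderate but (f_ε²) is not, so the space 𝓔_q(Ω) is not closed under multiplication and 𝓖_q(Ω) is not an algebra for q < ∞. (Remark 3.3.) -/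
open MeasureTheory SchwartzMap FourierTransform ENNReal

noncomputable section

abbrev Ed (d : ℕ) := EuclideanSpace ℝ (Fin d)

/-- Weighted `q`-integrability condition over `(0,1)`:
for `q < ∞`, `∫₀¹ ε^{qs} (F ε)^q dε/ε < ∞`; for `q = ∞`, `sup_{ε∈(0,1)} ε^s F ε < ∞`. -/
def QFin (q : ℝ≥0∞) (s : ℝ) (F : ℝ → ℝ≥0∞) : Prop :=
  if q = ⊤ then ∃ C : ℝ≥0∞, C ≠ ⊤ ∧ ∀ ε ∈ Set.Ioo (0:ℝ) 1, ENNReal.ofReal (ε ^ s) * F ε ≤ C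
  else ∫⁻ ε in Set.Ioo (0:ℝ) 1, ENNReal.ofReal (ε ^ (q.toReal * s) / ε) * F ε ^ q.toReal < ⊤

/-- Same as `QFin` but with an explicit bound `C`:
for `q < ∞`, `∫₀¹ ε^{qs} (F ε)^q dε/ε ≤ C^q`; for `q = ∞`, `sup_{ε∈(0,1)} ε^s F ε ≤ C`. -/
def QBound (q : ℝ≥0∞) (s : ℝ) (F : ℝ → ℝ≥0∞) (C : ℝ≥0∞) : Prop :=
  if q = ⊤ then ∀ ε ∈ Set.Ioo (0:ℝ) 1, ENNReal.ofReal (ε ^ s) * F ε ≤ C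
  else ∫⁻ ε in Set.Ioo (0:ℝ) 1, ENNReal.ofReal (ε ^ (q.toReal * s) / ε) * F ε ^ q.toReal ≤ C ^ q.toReal

/-- The Sobolev norm `‖f‖_{W^{k,p}(ω)} = max_{n ≤ k} ‖D^n f‖_{L^p(ω)}`. -/
def sobNorm (d k : ℕ) (p : ℝ≥0∞) (ω : Set (Ed d)) (f : Ed d → ℝ) : ℝ≥0∞ :=
  (Finset.range (k + 1)).sup fun n =>
    eLpNorm (fun x => ‖iteratedFDeriv ℝ n f x‖) p (volume.restrict ω)

/-- The Sobolev norm over `ω` of a function that is only smooth on the open set `Ω`. -/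
def sobNormOn (d : ℕ) (Ω : Set (Ed d)) (k : ℕ) (p : ℝ≥0∞) (ω : Set (Ed d))
    (f : Ed d → ℝ) : ℝ≥0∞ :=
  (Finset.range (k + 1)).sup fun n =>
    eLpNorm (fun x => ‖iteratedFDerivWithin ℝ n f Ω x‖) p (volume.restrict ω)

/-- `ψ_y = y^{-d} ψ(·/y)`. -/
def dilate (d : ℕ) (ψ : Ed d → ℝ) (y : ℝ) : Ed d → ℝ := fun x => (y ^ d)⁻¹ * ψ (y⁻¹ • x)

/-- A mollifier: a Schwartz function with `∫ φ = 1` and all higher moments vanishing. -/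
def IsMollifier (d : ℕ) (φ : Ed d → ℝ) : Prop :=
  (∃ Φ : 𝓢(Ed d, ℝ), ⇑Φ = φ) ∧ (∫ x, φ x) = 1 ∧
    ∀ α : Fin d → ℕ, α ≠ 0 → (∫ x, (∏ i, x i ^ α i) * φ x) = 0

/-- A Littlewood–Paley pair of order `s`. -/
def IsLPPair (d : ℕ) (s : ℝ) (φ ψ : Ed d → ℝ) : Prop :=
  (∃ Φ : 𝓢(Ed d, ℝ), ⇑Φ = φ) ∧ (∃ Ψ : 𝓢(Ed d, ℝ), ⇑Ψ = ψ) ∧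
  (∃ σ > (0:ℝ), ∃ η ∈ Set.Ioo (0:ℝ) 1,
    (∀ ξ : Ed d, ‖ξ‖ ≤ σ → 𝓕 (fun x => (φ x : ℂ)) ξ ≠ 0) ∧
    ∀ ξ : Ed d, η * σ ≤ ‖ξ‖ → ‖ξ‖ ≤ σ → 𝓕 (fun x => (ψ x : ℂ)) ξ ≠ 0) ∧
  ∀ α : Fin d → ℕ, ((∑ i, α i : ℕ) : ℤ) ≤ ⌊s⌋ → (∫ t, (∏ i, t i ^ α i) * ψ t) = 0

/-- Membership in the Besov space `B^s_{p,q}(ℝ^d)` of a distribution described through its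
convolution operator `S` (`S g = T ∗ g`). -/
def MemBesov (d : ℕ) (s : ℝ) (p q : ℝ≥0∞) (S : (Ed d → ℝ) → Ed d → ℝ) : Prop :=
  ∃ φ ψ : Ed d → ℝ, IsLPPair d s φ ψ ∧ eLpNorm (S φ) p volume < ⊤ ∧
    QFin q (-s) fun y => eLpNorm (S (dilate d ψ y)) p volume

/-- A (tempered) distribution with compact support, realized as a linear functional on
smooth functions satisfying the order/compact-support bound. -/
structure CompDist (d : ℕ) where
  toFun : (Ed d → ℝ) →ₗ[ℝ] ℝ
  supp : Set (Ed d)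
  supp_compact : IsCompact supp
  order : ℕ
  const : ℝ
  bound : ∀ f : Ed d → ℝ, ContDiff ℝ (⊤ : ℕ∞) f →
    |toFun f| ≤ const * ⨆ n ∈ Finset.range (order + 1), ⨆ x ∈ supp, ‖iteratedFDeriv ℝ n f x‖

/-- Convolution `T ∗ g` of a compactly supported distribution with a function. -/
def CompDist.conv {d : ℕ} (T : CompDist d) (g : Ed d → ℝ) : Ed d → ℝ :=
  fun x => T.toFun fun y => g (x - y)

open Classical in
/-- Convolution of a tempered distribution `T` with a (Schwartz) function `ψ`:
`(T ∗ ψ)(x) = ⟨T, ψ(x − ·)⟩`. -/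
def tconv (d : ℕ) (T : 𝓢(Ed d, ℝ) →L[ℝ] ℝ) (ψ : Ed d → ℝ) (x : Ed d) : ℝ :=
  if h : ∃ Ψ : 𝓢(Ed d, ℝ), ⇑Ψ = fun y => ψ (x - y) then T h.choose else 0

/-- The net `(f_ε)` is `L^q`-moderate on `Ω` (with `L^p`-based Sobolev norms). -/
def IsModerate (d : ℕ) (q p : ℝ≥0∞) (Ω : Set (Ed d)) (f : ℝ → Ed d → ℝ) : Prop :=
  (∀ ε ∈ Set.Ioo (0:ℝ) 1, ContDiffOn ℝ (⊤ : ℕ∞) (f ε) Ω) ∧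
  ContinuousOn (fun z : ℝ × Ed d => f z.1 z.2) (Set.Ioo (0:ℝ) 1 ×ˢ Ω) ∧
  ∀ (k : ℕ) (ω : Set (Ed d)), IsOpen ω → IsCompact (closure ω) → closure ω ⊆ Ω →
    ∃ s : ℝ, QFin q s fun ε => sobNormOn d Ω k p ω (f ε)

/-- The net `(f_ε)` is `L^q`-negligible on `Ω` (with `L^p`-based Sobolev norms). -/
def IsNegligible (d : ℕ) (q p : ℝ≥0∞) (Ω : Set (Ed d)) (f : ℝ → Ed d → ℝ) : Prop :=
  (∀ ε ∈ Set.Ioo (0:ℝ) 1, ContDiffOn ℝ (⊤ : ℕ∞) (f ε) Ω) ∧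
  ContinuousOn (fun z : ℝ × Ed d => f z.1 z.2) (Set.Ioo (0:ℝ) 1 ×ˢ Ω) ∧
  ∀ (k : ℕ) (ω : Set (Ed d)), IsOpen ω → IsCompact (closure ω) → closure ω ⊆ Ω →
    ∀ s : ℝ, QFin q s fun ε => sobNormOn d Ω k p ω (f ε)

/-- `T` is a distribution on the open set `Ω`: a linear functional on test functions with the
local seminorm bounds. -/
def IsDistributionOn (d : ℕ) (Ω : Set (Ed d)) (T : (Ed d → ℝ) →ₗ[ℝ] ℝ) : Prop :=
  ∀ K : Set (Ed d), IsCompact K → K ⊆ Ω → ∃ C : ℝ, ∃ k : ℕ,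
    ∀ ρ : Ed d → ℝ, ContDiff ℝ (⊤ : ℕ∞) ρ → tsupport ρ ⊆ K →
      |T ρ| ≤ C * ⨆ n ∈ Finset.range (k + 1), ⨆ x, ‖iteratedFDeriv ℝ n ρ x‖

/-- The net `(f_ε)` is strongly `q`-associated with the distribution `T` on `Ω`. -/
def StronglyQAssoc (d : ℕ) (q : ℝ≥0∞) (Ω : Set (Ed d)) (f : ℝ → Ed d → ℝ)
    (T : (Ed d → ℝ) →ₗ[ℝ] ℝ) : Prop :=
  ∀ ω : Set (Ed d), IsOpen ω → IsCompact (closure ω) → closure ω ⊆ Ω →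
    ∃ b > (0:ℝ), ∀ ρ : Ed d → ℝ, ContDiff ℝ (⊤ : ℕ∞) ρ → HasCompactSupport ρ → tsupport ρ ⊆ ω →
      QFin q (-b) fun ε => ENNReal.ofReal |T ρ - ∫ x, f ε x * ρ x|


section Rem33Aux
open Real Filter

noncomputable def fc (q ε : ℝ) : ℝ :=
  Real.exp (2 / (q * ε)) * max 0 (1 - |Real.sin (π / ε)| * Real.exp (3 / ε))

lemma fc_nonneg (q ε : ℝ) : 0 ≤ fc q ε :=
  mul_nonneg (Real.exp_pos _).le (le_max_left _ _)

lemma fc_contOn (q : ℝ) (hq : q ≠ 0) : ContinuousOn (fc q) (Set.Ioo 0 1) := by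
  have h : ∀ x ∈ Set.Ioo (0:ℝ) 1, x ≠ 0 := fun x hx => ne_of_gt hx.1
  apply ContinuousOn.mul
  · exact (Real.continuous_exp.comp_continuousOn
      (continuousOn_const.div (continuousOn_const.mul continuousOn_id)
        (fun x hx => mul_ne_zero hq (h x hx))))
  · apply continuousOn_const.sup
    apply continuousOn_const.sub
    apply ContinuousOn.mul
    · exact (Real.continuous_sin.comp_continuousOn
        (continuousOn_const.div continuousOn_id h)).abs
    · exact Real.continuous_exp.comp_continuousOn
        (continuousOn_const.div continuousOn_id h)

noncomputable def del (n : ℕ) : ℝ := Real.exp (3/2 - 3*(n:ℝ)) / 2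

noncomputable def Ic (n : ℕ) : Set ℝ := Set.Icc (((n:ℝ) + del n))⁻¹ (((n:ℝ) - del n))⁻¹

lemma del_pos (n : ℕ) : 0 < del n := by rw [del]; positivity

lemma del_le (n : ℕ) (hn : 1 ≤ n) : del n ≤ 1/2 := by
  have : Real.exp (3/2 - 3*(n:ℝ)) ≤ 1 := by
    apply Real.exp_le_one_iff.2
    have : (1:ℝ) ≤ (n:ℝ) := by exact_mod_cast hn
    linarith
  rw [del]; linarith

lemma key_upper (q : ℝ) (hq : 1 ≤ q) {ε : ℝ} (hε : ε ∈ Set.Ioo (0:ℝ) 1) :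
    ENNReal.ofReal (fc q ε ^ q) ≤
      ∑' n : ℕ, Set.indicator (Ic n) (fun _ => ENNReal.ofReal (Real.exp (2*(n:ℝ)+1))) ε := by
  have hq0 : (0:ℝ) < q := lt_of_lt_of_le one_pos hq
  by_cases hm : max 0 (1 - |Real.sin (π / ε)| * Real.exp (3 / ε)) = 0
  · rw [fc, hm, mul_zero, Real.zero_rpow hq0.ne', ENNReal.ofReal_zero]
    exact zero_le
  -- positive case
  have hmpos : 0 < 1 - |Real.sin (π / ε)| * Real.exp (3 / ε) := by
    by_contra h
    exact hm (max_eq_left (not_lt.mp h))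
  have hεpos := hε.1
  set t := ε⁻¹ with ht
  have ht1 : 1 < t := (one_lt_inv₀ hεpos).2 hε.2
  have htpos : 0 < t := lt_trans one_pos ht1
  -- round
  set m : ℤ := round t with hm'
  have hround : |t - m| ≤ 1/2 := abs_sub_round t
  have hm1 : 1 ≤ m := by
    have h0 : (0:ℝ) < (m:ℝ) := by
      cases abs_le.mp hround with
      | intro h1 h2 => linarith
    have : 0 < m := by exact_mod_cast h0
    omega
  set n : ℕ := m.toNat with hn'
  have hnm : (n:ℝ) = (m:ℝ) := by
    rw [hn']; exact_mod_cast Int.toNat_of_nonneg (by linarith)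
  have hn1 : 1 ≤ n := by omega
  have hn1' : (1:ℝ) ≤ (n:ℝ) := by exact_mod_cast hn1
  -- Jordan's inequality step
  have hsin' : |Real.sin (π / ε)| < Real.exp (-(3*t)) := by
    have h1 : |Real.sin (π / ε)| * Real.exp (3 / ε) < 1 := by linarith
    have h2 : (3:ℝ) / ε = 3 * t := by rw [div_eq_mul_inv]
    rw [h2] at h1
    rw [Real.exp_neg, ← one_div]
    exact (lt_div_iff₀ (Real.exp_pos _)).2 h1
  have hjordan : 2 * |t - m| ≤ |Real.sin (π / ε)| := by
    have h1 : π / ε = π * (t - m) + m * π := by rw [div_eq_mul_inv]; ring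
    rw [h1, Real.sin_add_int_mul_pi, abs_mul]
    have habs1 : |((-1:ℝ)) ^ m| = 1 := by
      rcases Int.even_or_odd m with he | ho
      · rw [he.neg_one_zpow, abs_one]
      · rw [ho.neg_one_zpow, abs_neg, abs_one]
    rw [habs1, one_mul]
    have hx : |π * (t - m)| ≤ π / 2 := by
      rw [abs_mul, abs_of_pos Real.pi_pos]
      nlinarith [Real.pi_pos, hround]
    have := Real.mul_abs_le_abs_sin hx
    rw [abs_mul, abs_of_pos Real.pi_pos] at this
    have hpi := Real.pi_pos
    calc 2 * |t - m| = 2 / π * (π * |t - m|) := by field_simp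
      _ ≤ |Real.sin (π * (t - m))| := this
  have hdist : |t - n| ≤ del n := by
    rw [hnm]
    have h1 : |t - m| ≤ Real.exp (-(3*t)) / 2 := by nlinarith
    have h2 : Real.exp (-(3*t)) ≤ Real.exp (3/2 - 3*(n:ℝ)) := by
      apply Real.exp_le_exp.2
      have : (n:ℝ) - 1/2 ≤ t := by
        rw [hnm]; cases abs_le.mp hround with | intro a b => linarith
      rw [hnm] at this ⊢
      linarith
    rw [del]; linarith
  have hddel : del n < (n:ℝ) := lt_of_le_of_lt (del_le n hn1) (by linarith)
  have hmem : ε ∈ Ic n := by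
    have hlo : (n:ℝ) - del n ≤ t := by cases abs_le.mp hdist with | intro a b => linarith
    have hhi : t ≤ (n:ℝ) + del n := by cases abs_le.mp hdist with | intro a b => linarith
    constructor
    · rw [← inv_inv ε, ← ht]
      exact inv_anti₀ htpos hhi
    · rw [← inv_inv ε, ← ht]
      exact inv_anti₀ (by linarith) hlo
  -- the value bound
  have hval : fc q ε ^ q ≤ Real.exp (2*(n:ℝ)+1) := by
    have hmask1 : max 0 (1 - |Real.sin (π / ε)| * Real.exp (3 / ε)) ≤ 1 := by
      apply max_le zero_le_one
      nlinarith [abs_nonneg (Real.sin (π / ε)), Real.exp_pos (3/ε)]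
    have h1 : fc q ε ≤ Real.exp (2 / (q * ε)) := by
      rw [fc]
      nlinarith [Real.exp_pos (2/(q*ε)), fc_nonneg q ε, le_max_left (0:ℝ) (1 - |Real.sin (π / ε)| * Real.exp (3 / ε))]
    have h2 : fc q ε ^ q ≤ Real.exp (2 / (q * ε)) ^ q :=
      Real.rpow_le_rpow (fc_nonneg q ε) h1 hq0.le
    have h3 : Real.exp (2 / (q * ε)) ^ q = Real.exp (2 * t) := by
      rw [← Real.exp_mul]
      congr 1
      have hε0 : ε ≠ 0 := ne_of_gt hεpos
      rw [ht]
      field_simp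
    have h4 : Real.exp (2 * t) ≤ Real.exp (2*(n:ℝ)+1) := by
      apply Real.exp_le_exp.2
      have hhi : t ≤ (n:ℝ) + del n := by cases abs_le.mp hdist with | intro a b => linarith
      have := del_le n hn1
      linarith
    calc fc q ε ^ q ≤ Real.exp (2 / (q * ε)) ^ q := h2
      _ = Real.exp (2 * t) := h3
      _ ≤ Real.exp (2*(n:ℝ)+1) := h4
  calc ENNReal.ofReal (fc q ε ^ q) ≤ ENNReal.ofReal (Real.exp (2*(n:ℝ)+1)) :=
        ENNReal.ofReal_le_ofReal hval
    _ = Set.indicator (Ic n) (fun _ => ENNReal.ofReal (Real.exp (2*(n:ℝ)+1))) ε := by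
        rw [Set.indicator_of_mem hmem]
    _ ≤ _ := ENNReal.le_tsum n

lemma vol_Ic_le (n : ℕ) : volume (Ic n) ≤ ENNReal.ofReal (4 * del n) := by
  rw [Ic, Real.volume_Icc]
  apply ENNReal.ofReal_le_ofReal
  have hd := del_pos n
  rcases Nat.eq_zero_or_pos n with h0 | h1
  · subst h0
    simp only [Nat.cast_zero, zero_add, zero_sub]
    have h1 : (0:ℝ) < (del 0)⁻¹ := by positivity
    have h2 : (-(del 0))⁻¹ = -((del 0)⁻¹) := by rw [inv_neg]
    rw [h2]
    linarith
  · have hn1 : (1:ℝ) ≤ (n:ℝ) := by exact_mod_cast h1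
    have hd2 := del_le n h1
    set d := del n
    have hpos : 0 < (n:ℝ) - d := by linarith
    have hpos2 : 0 < (n:ℝ) + d := by linarith
    have key : ((n:ℝ) - d)⁻¹ - ((n:ℝ) + d)⁻¹ = 2*d / (((n:ℝ) - d)*((n:ℝ) + d)) := by
      field_simp
      ring
    have h2 : (1:ℝ)/2 ≤ ((n:ℝ) - d)*((n:ℝ) + d) := by nlinarith
    rw [key, div_le_iff₀ (by nlinarith)]
    nlinarith

lemma fin_part (q : ℝ) (hq : 1 ≤ q) :
    ∫⁻ ε in Set.Ioo (0:ℝ) 1,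
      ENNReal.ofReal (ε ^ (q * (1/q)) / ε) * ENNReal.ofReal (fc q ε) ^ q < ⊤ := by
  have hq0 : (0:ℝ) < q := lt_of_lt_of_le one_pos hq
  have hqs : q * (1/q) = 1 := by field_simp
  have step1 : (∫⁻ ε in Set.Ioo (0:ℝ) 1,
      ENNReal.ofReal (ε ^ (q * (1/q)) / ε) * ENNReal.ofReal (fc q ε) ^ q)
      = ∫⁻ ε in Set.Ioo (0:ℝ) 1, ENNReal.ofReal (fc q ε ^ q) := by
    apply setLIntegral_congr_fun measurableSet_Ioo
    intro ε hε
    beta_reduce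
    rw [hqs, Real.rpow_one, div_self (ne_of_gt hε.1), ENNReal.ofReal_one, one_mul,
        ENNReal.ofReal_rpow_of_nonneg (fc_nonneg q ε) hq0.le]
  rw [step1]
  have step2 : (∫⁻ ε in Set.Ioo (0:ℝ) 1, ENNReal.ofReal (fc q ε ^ q))
      ≤ ∑' n : ℕ, ENNReal.ofReal (Real.exp (2*(n:ℝ)+1)) * volume (Ic n) := by
    calc (∫⁻ ε in Set.Ioo (0:ℝ) 1, ENNReal.ofReal (fc q ε ^ q))
        ≤ ∫⁻ ε in Set.Ioo (0:ℝ) 1,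
            ∑' n : ℕ, Set.indicator (Ic n) (fun _ => ENNReal.ofReal (Real.exp (2*(n:ℝ)+1))) ε :=
          setLIntegral_mono' measurableSet_Ioo (fun ε hε => key_upper q hq hε)
      _ ≤ ∫⁻ ε, ∑' n : ℕ, Set.indicator (Ic n) (fun _ => ENNReal.ofReal (Real.exp (2*(n:ℝ)+1))) ε :=
          setLIntegral_le_lintegral _ _
      _ = ∑' n : ℕ, ∫⁻ ε, Set.indicator (Ic n) (fun _ => ENNReal.ofReal (Real.exp (2*(n:ℝ)+1))) ε :=
          lintegral_tsum (fun n => (measurable_const.indicator measurableSet_Icc).aemeasurable)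
      _ = ∑' n : ℕ, ENNReal.ofReal (Real.exp (2*(n:ℝ)+1)) * volume (Ic n) := by
          congr 1
          funext n
          exact lintegral_indicator_const measurableSet_Icc _
  have step3 : ∑' n : ℕ, ENNReal.ofReal (Real.exp (2*(n:ℝ)+1)) * volume (Ic n)
      ≤ ∑' n : ℕ, ENNReal.ofReal (2 * Real.exp (5/2)) * ENNReal.ofReal (Real.exp (-1)) ^ n := by
    apply ENNReal.tsum_le_tsum
    intro n
    calc ENNReal.ofReal (Real.exp (2*(n:ℝ)+1)) * volume (Ic n)
        ≤ ENNReal.ofReal (Real.exp (2*(n:ℝ)+1)) * ENNReal.ofReal (4 * del n) :=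
          mul_le_mul_right (vol_Ic_le n) _
      _ = ENNReal.ofReal (Real.exp (2*(n:ℝ)+1) * (4 * del n)) := by
          rw [ENNReal.ofReal_mul (Real.exp_pos _).le]
      _ = ENNReal.ofReal (2 * Real.exp (5/2) * Real.exp (-1) ^ n) := by
          congr 1
          rw [del, ← Real.exp_nat_mul]
          have h : rexp (2*(n:ℝ)+1) * rexp (3/2-3*(n:ℝ)) = rexp (5/2) * rexp ((n:ℝ) * -1) := by
            rw [← Real.exp_add, ← Real.exp_add]; ring_nf
          linear_combination 2 * h
      _ = ENNReal.ofReal (2 * Real.exp (5/2)) * ENNReal.ofReal (Real.exp (-1)) ^ n := by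
          rw [ENNReal.ofReal_mul (by positivity), ENNReal.ofReal_pow (Real.exp_pos _).le]
  have hr : ENNReal.ofReal (Real.exp (-1)) < 1 := by
    rw [ENNReal.ofReal_lt_one]
    exact Real.exp_lt_one_iff.2 (by norm_num)
  have step4 : ∑' n : ℕ, ENNReal.ofReal (2 * Real.exp (5/2)) * ENNReal.ofReal (Real.exp (-1)) ^ n < ⊤ := by
    rw [ENNReal.tsum_mul_left, ENNReal.tsum_geometric]
    apply ENNReal.mul_lt_top ENNReal.ofReal_lt_top
    rw [ENNReal.inv_lt_top]
    exact tsub_pos_iff_lt.2 hr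
  exact lt_of_le_of_lt (le_trans step2 step3) step4

noncomputable def rr (n : ℕ) : ℝ := Real.exp (-3*(n:ℝ)-3)

lemma rr_pos (n : ℕ) : 0 < rr n := Real.exp_pos _

lemma key_lower (q : ℝ) (hq : 1 ≤ q) (n : ℕ) (hn : 2 ≤ n) {ε : ℝ}
    (hε : ε ∈ Set.Icc (((n:ℝ) + rr n))⁻¹ ((n:ℝ))⁻¹) :
    Real.exp ((2*n)/q) / 2 ≤ fc q ε := by
  have hq0 : (0:ℝ) < q := lt_of_lt_of_le one_pos hq
  have hn1 : (1:ℝ) ≤ (n:ℝ) := by exact_mod_cast Nat.one_le_of_lt hn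
  have hrp := rr_pos n
  have hεpos : 0 < ε := lt_of_lt_of_le (by positivity) hε.1
  set t := ε⁻¹ with ht
  have htn : (n:ℝ) ≤ t := by
    rw [ht, le_inv_comm₀ (by positivity) hεpos]
    exact hε.2
  have htn' : t ≤ (n:ℝ) + rr n := by
    rw [ht, inv_le_comm₀ hεpos (by positivity)]
    exact hε.1
  -- mask bound
  have hsin : |Real.sin (π / ε)| ≤ π * rr n := by
    have h1 : π / ε = π * (t - n) + (n:ℕ) * π := by
      rw [div_eq_mul_inv, ← ht]; ring
    rw [h1, Real.sin_add_nat_mul_pi, abs_mul, abs_pow, abs_neg, abs_one, one_pow, one_mul]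
    calc |Real.sin (π * (t - n))| ≤ |π * (t - n)| := Real.abs_sin_le_abs
      _ = π * (t - n) := abs_of_nonneg (by nlinarith [Real.pi_pos])
      _ ≤ π * rr n := by nlinarith [Real.pi_pos]
  have hexp3 : Real.exp (3 / ε) ≤ Real.exp (3 * n) * 3 := by
    have h1 : 3 / ε = 3 * t := by rw [div_eq_mul_inv, ht]
    have h2 : 3 * rr n ≤ 1 := by
      have : rr n ≤ Real.exp (-2) := by
        apply Real.exp_le_exp.2
        have : (2:ℝ) ≤ (n:ℝ) := by exact_mod_cast hn
        nlinarith
      have he : Real.exp (-2) ≤ 1/3 := by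
        rw [Real.exp_neg]
        rw [inv_le_comm₀ (by positivity) (by norm_num)]
        have h9 := Real.exp_one_gt_d9
        have : Real.exp 2 = Real.exp 1 ^ 2 := by
          rw [← Real.exp_nat_mul]; norm_num
        nlinarith
      linarith
    rw [h1]
    calc Real.exp (3 * t) ≤ Real.exp (3 * n + 3 * rr n) := by
          apply Real.exp_le_exp.2; nlinarith
      _ = Real.exp (3 * n) * Real.exp (3 * rr n) := Real.exp_add _ _
      _ ≤ Real.exp (3 * n) * 3 := by
          have := Real.exp_one_lt_d9
          have h3 : Real.exp (3 * rr n) ≤ Real.exp 1 := Real.exp_le_exp.2 (by linarith)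
          nlinarith [Real.exp_pos (3 * (n:ℝ))]
  have hmask : (1:ℝ)/2 ≤ max 0 (1 - |Real.sin (π / ε)| * Real.exp (3 / ε)) := by
    have hprod : |Real.sin (π / ε)| * Real.exp (3 / ε) ≤ 1/2 := by
      calc |Real.sin (π / ε)| * Real.exp (3 / ε)
          ≤ (π * rr n) * (Real.exp (3 * n) * 3) := by
            apply mul_le_mul hsin hexp3 (Real.exp_pos _).le
            positivity
        _ = 3 * π * (Real.exp (-3*(n:ℝ)-3) * Real.exp (3*n)) := by rw [rr]; ring
        _ = 3 * π * Real.exp (-3) := by rw [← Real.exp_add]; ring_nf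
        _ ≤ 1/2 := by
            have hpi := Real.pi_lt_d2
            have h9 := Real.exp_one_gt_d9
            have he3 : Real.exp 3 = Real.exp 1 ^ 3 := by
              rw [← Real.exp_nat_mul]; norm_num
            have hcube : (2.7182818283:ℝ)^3 ≤ Real.exp 1 ^ 3 :=
              pow_le_pow_left₀ (by norm_num) h9.le 3
            rw [Real.exp_neg]
            rw [mul_inv_le_iff₀ (by positivity)]
            nlinarith [hcube]
    have : (1:ℝ)/2 ≤ 1 - |Real.sin (π / ε)| * Real.exp (3 / ε) := by linarith
    exact le_trans this (le_max_right _ _)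
  have hexp2 : Real.exp ((2*n)/q) ≤ Real.exp (2 / (q * ε)) := by
    apply Real.exp_le_exp.2
    have h1 : 2 / (q * ε) = (2 * t) / q := by
      rw [ht]; field_simp
    rw [h1]
    gcongr
  calc Real.exp ((2*n)/q)/2 = Real.exp ((2*n)/q) * (1/2) := by ring
    _ ≤ fc q ε := mul_le_mul hexp2 hmask (by norm_num) (Real.exp_pos _).le

lemma rr_le_one (n : ℕ) : rr n ≤ 1 := by
  rw [rr]; apply Real.exp_le_one_iff.2; have : (0:ℝ) ≤ (n:ℝ) := Nat.cast_nonneg n; linarith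

lemma inf_part (q : ℝ) (hq : 1 ≤ q) (s : ℝ) :
    ∫⁻ ε in Set.Ioo (0:ℝ) 1,
      ENNReal.ofReal (ε ^ (q * s) / ε) * ENNReal.ofReal (fc q ε) ^ (2 * q) = ⊤ := by
  have hq0 : (0:ℝ) < q := lt_of_lt_of_le one_pos hq
  set a : ℝ := q * s with ha
  set X := ∫⁻ ε in Set.Ioo (0:ℝ) 1,
      ENNReal.ofReal (ε ^ a / ε) * ENNReal.ofReal (fc q ε) ^ (2 * q) with hX
  set g : ℕ → ℝ := fun n =>
    (2*(n:ℝ)) ^ (-|a|) * (Real.exp (4*(n:ℝ)) / (2:ℝ) ^ (2*q)) * (rr n / (2*(n:ℝ)^2)) with hg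
  -- main estimate
  have main : ∀ n : ℕ, 2 ≤ n → ENNReal.ofReal (g n) ≤ X := by
    intro n hn
    have hn1 : (1:ℝ) ≤ (n:ℝ) := by exact_mod_cast Nat.one_le_of_lt hn
    have hrp := rr_pos n
    have hr1 := rr_le_one n
    set J : Set ℝ := Set.Icc (((n:ℝ) + rr n))⁻¹ ((n:ℝ))⁻¹ with hJ
    have hJsub : J ⊆ Set.Ioo (0:ℝ) 1 := by
      intro x hx
      have hx1 : 0 < x := lt_of_lt_of_le (by positivity) hx.1
      have hn2 : (2:ℝ) ≤ (n:ℝ) := by exact_mod_cast hn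
      have : (n:ℝ)⁻¹ < 1 := by
        rw [inv_lt_one_iff₀]; right; linarith
      exact ⟨hx1, lt_of_le_of_lt hx.2 this⟩
    -- pointwise bound on J
    have hpt : ∀ ε ∈ J,
        ENNReal.ofReal ((2*(n:ℝ)) ^ (-|a|)) * ENNReal.ofReal (Real.exp (4*(n:ℝ)) / (2:ℝ) ^ (2*q))
          ≤ ENNReal.ofReal (ε ^ a / ε) * ENNReal.ofReal (fc q ε) ^ (2 * q) := by
      intro ε hε
      have hεpos : 0 < ε := (hJsub hε).1
      have hε1 : ε ≤ 1 := le_of_lt (hJsub hε).2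
      have hεinv : 1 ≤ ε⁻¹ := (one_le_inv₀ hεpos).2 hε1
      have hε2n : (2*(n:ℝ))⁻¹ ≤ ε := by
        refine le_trans ?_ hε.1
        apply inv_anti₀ (by positivity)
        linarith
      apply mul_le_mul'
      · -- weight bound
        apply ENNReal.ofReal_le_ofReal
        rw [div_eq_mul_inv]
        rcases le_or_gt 0 a with hap | han
        · rw [abs_of_nonneg hap]
          have h1 : ((2*(n:ℝ))⁻¹) ^ a ≤ ε ^ a := Real.rpow_le_rpow (by positivity) hε2n hap
          rw [Real.inv_rpow (by positivity), ← Real.rpow_neg (by positivity)] at h1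
          nlinarith [Real.rpow_nonneg (by positivity : (0:ℝ) ≤ 2*(n:ℝ)) (-a),
            Real.rpow_nonneg hεpos.le a]
        · rw [abs_of_neg han, neg_neg]
          have h1 : (1:ℝ) ≤ ε ^ a :=
            Real.one_le_rpow_of_pos_of_le_one_of_nonpos hεpos hε1 han.le
          have h2 : (2*(n:ℝ)) ^ a ≤ 1 :=
            Real.rpow_le_one_of_one_le_of_nonpos (by linarith) han.le
          nlinarith
      · -- value bound
        have hkey := key_lower q hq n hn hε
        have h0 : (0:ℝ) ≤ 2 * q := by linarith
        calc ENNReal.ofReal (Real.exp (4*(n:ℝ)) / (2:ℝ) ^ (2*q))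
            = ENNReal.ofReal ((Real.exp ((2*n)/q) / 2) ^ (2*q)) := by
              congr 1
              rw [Real.div_rpow (Real.exp_pos _).le (by norm_num), ← Real.exp_mul]
              congr 2
              field_simp
              ring
          _ = ENNReal.ofReal (Real.exp ((2*n)/q) / 2) ^ (2*q) :=
              (ENNReal.ofReal_rpow_of_nonneg (by positivity) h0).symm
          _ ≤ ENNReal.ofReal (fc q ε) ^ (2*q) :=
              ENNReal.rpow_le_rpow (ENNReal.ofReal_le_ofReal hkey) h0
    have hvol : ENNReal.ofReal (rr n / (2*(n:ℝ)^2)) ≤ volume J := by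
      rw [hJ, Real.volume_Icc]
      apply ENNReal.ofReal_le_ofReal
      have hposn : (0:ℝ) < (n:ℝ) := by linarith
      have key : ((n:ℝ))⁻¹ - ((n:ℝ) + rr n)⁻¹ = rr n / ((n:ℝ) * ((n:ℝ) + rr n)) := by
        field_simp
        ring
      rw [key]
      apply div_le_div_of_nonneg_left hrp.le (by positivity) (by nlinarith)
    -- combine
    calc ENNReal.ofReal (g n)
        = ENNReal.ofReal ((2*(n:ℝ)) ^ (-|a|)) * ENNReal.ofReal (Real.exp (4*(n:ℝ)) / (2:ℝ) ^ (2*q))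
            * ENNReal.ofReal (rr n / (2*(n:ℝ)^2)) := by
          rw [hg, ← ENNReal.ofReal_mul (by positivity), ← ENNReal.ofReal_mul (by positivity)]
      _ ≤ (ENNReal.ofReal ((2*(n:ℝ)) ^ (-|a|)) * ENNReal.ofReal (Real.exp (4*(n:ℝ)) / (2:ℝ) ^ (2*q)))
            * volume J := mul_le_mul_right hvol _
      _ = ∫⁻ _ in J, (ENNReal.ofReal ((2*(n:ℝ)) ^ (-|a|))
            * ENNReal.ofReal (Real.exp (4*(n:ℝ)) / (2:ℝ) ^ (2*q))) := (setLIntegral_const _ _).symm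
      _ ≤ ∫⁻ ε in J, ENNReal.ofReal (ε ^ a / ε) * ENNReal.ofReal (fc q ε) ^ (2 * q) :=
          setLIntegral_mono' measurableSet_Icc hpt
      _ ≤ X := by
          rw [hX]
          exact lintegral_mono' (Measure.restrict_mono hJsub le_rfl) le_rfl
  -- tendsto
  set p : ℝ := |a| + 2 with hp
  set c : ℝ := (2:ℝ) ^ (-|a|) * ((2:ℝ) ^ (2*q))⁻¹ * (Real.exp (-3) / 2) with hc
  have hcpos : 0 < c := by rw [hc]; positivity
  have geq : ∀ n : ℕ, 1 ≤ n → g n = c * (Real.exp (n:ℝ) / (n:ℝ) ^ p) := by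
    intro n hn
    have hn0 : (0:ℝ) < (n:ℝ) := by exact_mod_cast hn
    have e1 : (2*(n:ℝ)) ^ (-|a|) = (2:ℝ) ^ (-|a|) * (n:ℝ) ^ (-|a|) :=
      Real.mul_rpow (by norm_num) hn0.le
    have e2 : (n:ℝ) ^ (-|a|) = ((n:ℝ) ^ |a|)⁻¹ := Real.rpow_neg hn0.le _
    have e3 : (n:ℝ) ^ p = (n:ℝ) ^ |a| * (n:ℝ) ^ (2:ℕ) := by
      rw [hp, Real.rpow_add hn0]
      congr 1
      rw [show ((2:ℝ)) = ((2:ℕ):ℝ) by norm_num, Real.rpow_natCast]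
    have e4 : Real.exp (4*(n:ℝ)) * rr n = Real.exp (-3) * Real.exp (n:ℝ) := by
      rw [rr, ← Real.exp_add, ← Real.exp_add]; ring_nf
    have hpow : (0:ℝ) < (n:ℝ) ^ |a| := Real.rpow_pos_of_pos hn0 _
    have hpow2 : (0:ℝ) < (2:ℝ) ^ (2*q) := Real.rpow_pos_of_pos (by norm_num) _
    calc g n = (2:ℝ) ^ (-|a|) / ((2:ℝ) ^ (2*q) * (2*(n:ℝ)^2) * (n:ℝ) ^ |a|)
          * (Real.exp (4*(n:ℝ)) * rr n) := by
            simp only [hg]; rw [e1, e2]; field_simp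
      _ = (2:ℝ) ^ (-|a|) / ((2:ℝ) ^ (2*q) * (2*(n:ℝ)^2) * (n:ℝ) ^ |a|)
          * (Real.exp (-3) * Real.exp (n:ℝ)) := by rw [e4]
      _ = c * (Real.exp (n:ℝ) / (n:ℝ) ^ p) := by
            rw [e3, hc]; field_simp
  have T1 : Tendsto (fun n : ℕ => c * (Real.exp (n:ℝ) / (n:ℝ) ^ p)) atTop atTop := by
    apply Tendsto.const_mul_atTop hcpos
    exact (tendsto_exp_div_rpow_atTop p).comp tendsto_natCast_atTop_atTop

  apply ENNReal.eq_top_of_forall_nnreal_le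
  intro r
  obtain ⟨N, hN⟩ := Filter.eventually_atTop.mp (Filter.tendsto_atTop.mp T1 (r:ℝ))
  set n := max N 2 with hn
  have hn2 : 2 ≤ n := le_max_right _ _
  have hgn : (r:ℝ) ≤ g n := by
    rw [geq n (by omega)]
    exact hN n (le_max_left _ _)
  calc (r : ℝ≥0∞) = ENNReal.ofReal (r:ℝ) := ENNReal.ofReal_coe_nnreal.symm
    _ ≤ ENNReal.ofReal (g n) := ENNReal.ofReal_le_ofReal hgn
    _ ≤ X := main n hn2

end Rem33Aux

/-- Remark 3.3: for `q < ∞` there is a continuous `f : (0,1) → [0,∞)` whose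
`q`-th power net is moderate while the `q`-th power of `f²` is not (for any weight). -/
theorem moderate_not_closed_under_square (q : ℝ) (hq : 1 ≤ q) :
    ∃ f : ℝ → ℝ, ContinuousOn f (Set.Ioo 0 1) ∧ (∀ ε ∈ Set.Ioo (0:ℝ) 1, 0 ≤ f ε) ∧
      (∃ s : ℝ, ∫⁻ ε in Set.Ioo (0:ℝ) 1,
        ENNReal.ofReal (ε ^ (q * s) / ε) * ENNReal.ofReal (f ε) ^ q < ⊤) ∧
      ∀ s : ℝ, ∫⁻ ε in Set.Ioo (0:ℝ) 1,
        ENNReal.ofReal (ε ^ (q * s) / ε) * ENNReal.ofReal (f ε) ^ (2 * q) = ⊤ := by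
  have hq0 : (0:ℝ) < q := lt_of_lt_of_le one_pos hq
  exact ⟨fc q, fc_contOn q hq0.ne', fun ε _ => fc_nonneg q ε, ⟨1/q, fin_part q hq⟩,
    fun s => inf_part q hq s⟩

end
end

section
/- For all 1 ≤ q < q′ ≤ ∞ there exists a continuous function g : (0,1) → [0,∞) such that ∫_0^1 ε^{qs} g(ε)^q dε/ε < ∞ for every s ∈ ℝ, while there is some s ∈ ℝ with ∫_0^1 ε^{q′s} g(ε)^{q′} dε/ε = ∞ (for q′ = ∞: with sup_{ε∈(0,1)} ε^s g(ε) = ∞). (For instance, for n ≥ 4 set g(ε) = e^{n/q − √n} on [n^{−1} − e^{−n}/2, n^{−1} + e^{−n}/2], extend linearly to vanish at the endpoints of [n^{−1} − e^{−n}, n^{−1} + e^{−n}], and set g = 0 elsewhere.) Consequently, viewing g as a net of constant functions, (g_ε) ∈ 𝓝_q(Ω) but (g_ε) ∉ 𝓝_{q′}(Ω), so the canonical map 𝓖_{q′}(Ω) → 𝓖_q(Ω) is not injective. (Remark 3.4.) -/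
open MeasureTheory SchwartzMap FourierTransform ENNReal

noncomputable section

private lemma aux_intOn {t : ℝ} (ht : -1 < t) :
    MeasureTheory.IntegrableOn (fun ε : ℝ => (1 - ε) ^ t) (Set.Ioo (0:ℝ) 1) := by
  have h1 : IntervalIntegrable (fun x : ℝ => x ^ t) volume 0 1 :=
    intervalIntegral.intervalIntegrable_rpow' ht
  have h2 := (h1.comp_sub_left 1).symm
  rw [sub_zero, sub_self] at h2
  rwa [intervalIntegrable_iff_integrableOn_Ioo_of_le (by norm_num : (0:ℝ) ≤ 1)] at h2

private lemma aux_div :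
    ∫⁻ ε in Set.Ioo (3/4 : ℝ) 1, ENNReal.ofReal ((1 - ε) ^ (-1 : ℝ)) = ⊤ := by
  by_contra h
  have hmeas : Measurable fun ε : ℝ => (1 - ε) ^ (-1 : ℝ) :=
    (measurable_const.sub measurable_id).pow_const _
  have hnn : 0 ≤ᵐ[volume.restrict (Set.Ioo (3/4:ℝ) 1)] fun ε : ℝ => (1 - ε) ^ (-1:ℝ) := by
    refine (ae_restrict_iff' measurableSet_Ioo).mpr (ae_of_all _ fun ε hε => ?_)
    exact Real.rpow_nonneg (by linarith [hε.2]) _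
  have hint : MeasureTheory.IntegrableOn (fun ε : ℝ => (1 - ε) ^ (-1:ℝ))
      (Set.Ioo (3/4:ℝ) 1) :=
    (MeasureTheory.lintegral_ofReal_ne_top_iff_integrable
      hmeas.aestronglyMeasurable hnn).mp h
  have h1 : IntervalIntegrable (fun ε : ℝ => (1 - ε) ^ (-1:ℝ)) volume (3/4) 1 := by
    rw [intervalIntegrable_iff_integrableOn_Ioo_of_le (by norm_num : (3/4:ℝ) ≤ 1)]
    exact hint
  have h2 := (h1.comp_sub_left 1).symm
  rw [show (1:ℝ) - 1 = 0 by norm_num, show (1:ℝ) - 3/4 = 1/4 by norm_num] at h2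
  rw [intervalIntegrable_iff_integrableOn_Ioo_of_le (by norm_num : (0:ℝ) ≤ 1/4)] at h2
  have h3 : MeasureTheory.IntegrableOn (fun x : ℝ => x ^ (-1:ℝ)) (Set.Ioo (0:ℝ) (1/4)) :=
    h2.congr_fun (fun x _ => by beta_reduce; rw [_root_.sub_sub_cancel]) measurableSet_Ioo
  rw [intervalIntegral.integrableOn_Ioo_rpow_iff (by norm_num : (0:ℝ) < 1/4)] at h3
  linarith

/-- Remark 3.4: for `1 ≤ q < q′ ≤ ∞` there is a continuous `g : (0,1) → [0,∞)`
which is `L^q`-negligible but not `L^{q′}`-negligible. -/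
theorem negligible_not_injective (q q' : ℝ≥0∞) (hq : 1 ≤ q) (hlt : q < q') :
    ∃ g : ℝ → ℝ, ContinuousOn g (Set.Ioo 0 1) ∧ (∀ ε ∈ Set.Ioo (0:ℝ) 1, 0 ≤ g ε) ∧
      (∀ s : ℝ, QFin q s fun ε => ENNReal.ofReal (g ε)) ∧
      ∃ s : ℝ, ¬ QFin q' s fun ε => ENNReal.ofReal (g ε) := by
  have hqt : q ≠ ⊤ := hlt.ne_top
  have hQ1 : (1:ℝ) ≤ q.toReal := by
    have := ENNReal.toReal_mono hqt hq
    simpa using this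
  have hQ0 : (0:ℝ) < q.toReal := by linarith
  have hq'0 : q' ≠ 0 := by
    intro h0
    rw [h0] at hlt
    exact (not_lt_of_ge (zero_le : (0:ℝ≥0∞) ≤ q)) hlt
  set r : ℝ := if q' = ⊤ then 1 / (2 * q.toReal) else 1 / q'.toReal with hr_def
  have hr0 : 0 < r := by
    rw [hr_def]; split_ifs with h
    · positivity
    · have hQ'0 : 0 < q'.toReal := ENNReal.toReal_pos hq'0 h
      positivity
  have hrQ : q.toReal * r < 1 := by
    rw [hr_def]; split_ifs with h
    · rw [mul_one_div, div_lt_one (by positivity)]; linarith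
    · have hQQ' : q.toReal < q'.toReal := (ENNReal.toReal_lt_toReal hqt h).mpr hlt
      rw [mul_one_div, div_lt_one (by linarith : (0:ℝ) < q'.toReal)]
      exact hQQ'
  refine ⟨fun ε => max (2*ε - 1) 0 * (1 - ε) ^ (-r), ?_, ?_, ?_, ?_⟩
  · apply ContinuousOn.mul
    · exact (((continuous_const.mul continuous_id).sub continuous_const).max
        continuous_const).continuousOn
    · exact (continuous_const.sub continuous_id).continuousOn.rpow_const
        fun x hx => Or.inl (sub_ne_zero_of_ne hx.2.ne')
  · exact fun ε hε => mul_nonneg (le_max_right _ _)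
      (Real.rpow_nonneg (by linarith [hε.2]) _)
  · intro s
    simp only [QFin, if_neg hqt]
    set Q := q.toReal with hQdef
    set t := Q * r with ht_def
    have ht0 : 0 < t := mul_pos hQ0 hr0
    have ht1 : t < 1 := hrQ
    set C : ℝ := max 1 ((1/2 : ℝ) ^ (Q * s - 1)) with hC
    have hC1 : (1:ℝ) ≤ C := le_max_left _ _
    have hC0 : (0:ℝ) ≤ C := by linarith
    have hbound : ∀ ε ∈ Set.Ioo (0:ℝ) 1,
        ENNReal.ofReal (ε ^ (Q * s) / ε)
            * (ENNReal.ofReal (max (2*ε-1) 0 * (1-ε) ^ (-r))) ^ Q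
          ≤ ENNReal.ofReal (C * (1-ε) ^ (-t)) := by
      intro ε hε
      rcases le_or_gt ε (1/2) with hhalf | hhalf
      · have hz : max (2*ε-1) 0 = 0 := max_eq_right (by linarith)
        rw [hz, zero_mul, ENNReal.ofReal_zero, ENNReal.zero_rpow_of_pos hQ0, mul_zero]
        exact zero_le
      · have hε0 : 0 < ε := hε.1
        have hε1 : ε < 1 := hε.2
        have h1ε : 0 < 1 - ε := by linarith
        have e1 : ε ^ (Q * s) / ε = ε ^ (Q * s - 1) := by
          rw [Real.rpow_sub hε0, Real.rpow_one]
        have e2 : ε ^ (Q * s - 1) ≤ C := by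
          rcases le_or_gt 0 (Q * s - 1) with hexp | hexp
          · exact le_trans (Real.rpow_le_one hε0.le hε1.le hexp) hC1
          · exact le_trans (Real.rpow_le_rpow_of_nonpos (by norm_num) hhalf.le hexp.le)
              (le_max_right _ _)
        have e3 : max (2*ε-1) 0 * (1-ε) ^ (-r) ≤ (1-ε) ^ (-r) :=
          mul_le_of_le_one_left (Real.rpow_nonneg h1ε.le _)
            (max_le (by linarith) (by norm_num))
        calc ENNReal.ofReal (ε ^ (Q * s) / ε)
              * (ENNReal.ofReal (max (2*ε-1) 0 * (1-ε) ^ (-r))) ^ Q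
            ≤ ENNReal.ofReal C * (ENNReal.ofReal ((1-ε) ^ (-r))) ^ Q := by
              refine mul_le_mul' ?_ (ENNReal.rpow_le_rpow (ENNReal.ofReal_le_ofReal e3) hQ0.le)
              rw [e1]; exact ENNReal.ofReal_le_ofReal e2
          _ = ENNReal.ofReal C * ENNReal.ofReal ((1-ε) ^ (-t)) := by
              rw [ENNReal.ofReal_rpow_of_nonneg (Real.rpow_nonneg h1ε.le _) hQ0.le,
                ← Real.rpow_mul h1ε.le, show -r * Q = -t by rw [ht_def]; ring]
          _ = ENNReal.ofReal (C * (1-ε) ^ (-t)) := (ENNReal.ofReal_mul hC0).symm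
    refine lt_of_le_of_lt (MeasureTheory.setLIntegral_mono' measurableSet_Ioo hbound) ?_
    have hint : MeasureTheory.IntegrableOn (fun ε : ℝ => C * (1-ε) ^ (-t))
        (Set.Ioo (0:ℝ) 1) := (aux_intOn (by linarith : (-1:ℝ) < -t)).const_mul C
    have hmeas : Measurable fun ε : ℝ => C * (1-ε) ^ (-t) :=
      measurable_const.mul ((measurable_const.sub measurable_id).pow_const _)
    have hnn : 0 ≤ᵐ[volume.restrict (Set.Ioo (0:ℝ) 1)] fun ε : ℝ => C * (1-ε) ^ (-t) := by
      refine (ae_restrict_iff' measurableSet_Ioo).mpr (ae_of_all _ fun ε hε => ?_)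
      exact mul_nonneg hC0 (Real.rpow_nonneg (by linarith [hε.2]) _)
    exact lt_top_iff_ne_top.mpr
      ((MeasureTheory.lintegral_ofReal_ne_top_iff_integrable
        hmeas.aestronglyMeasurable hnn).mpr hint)
  · refine ⟨0, ?_⟩
    by_cases hq't : q' = ⊤
    · simp only [QFin, if_pos hq't]
      rintro ⟨C, hCt, hC⟩
      set M : ℝ := 2 * (C.toReal + 1) + 2 with hM
      have hCnn : 0 ≤ C.toReal := ENNReal.toReal_nonneg
      have hM0 : 0 < M := by positivity
      have hMr : 0 < M ^ (-1/r) := Real.rpow_pos_of_pos hM0 _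
      set ε : ℝ := max (3/4) (1 - M ^ (-1/r)) with hε
      have hε34 : 3/4 ≤ ε := le_max_left _ _
      have hε1 : ε < 1 := max_lt (by norm_num) (by linarith)
      have hεmem : ε ∈ Set.Ioo (0:ℝ) 1 := ⟨by linarith, hε1⟩
      have h1ε0 : 0 < 1 - ε := by linarith
      have h1εle : 1 - ε ≤ M ^ (-1/r) := by
        have := le_max_right (3/4 : ℝ) (1 - M ^ (-1/r))
        linarith
      have hrp : M ≤ (1 - ε) ^ (-r) := by
        have h1 : (M ^ (-1/r)) ^ (-r) ≤ (1 - ε) ^ (-r) :=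
          Real.rpow_le_rpow_of_nonpos h1ε0 h1εle (by linarith)
        calc M = M ^ ((-1/r) * (-r)) := by
                rw [show (-1/r) * (-r) = 1 by field_simp, Real.rpow_one]
          _ = (M ^ (-1/r)) ^ (-r) := Real.rpow_mul hM0.le _ _
          _ ≤ _ := h1
      have hg : C.toReal + 1 ≤ max (2*ε - 1) 0 * (1 - ε) ^ (-r) := by
        have h2 : (1/2 : ℝ) ≤ max (2*ε-1) 0 := le_max_of_le_left (by linarith)
        have h3 := mul_le_mul h2 hrp hM0.le
          (le_trans (by norm_num : (0:ℝ) ≤ 1/2) h2)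
        linarith [h3]
      have hcontra := hC ε hεmem
      rw [Real.rpow_zero, ENNReal.ofReal_one, one_mul] at hcontra
      have hlt' : C < ENNReal.ofReal (max (2*ε-1) 0 * (1-ε) ^ (-r)) := by
        rw [ENNReal.lt_ofReal_iff_toReal_lt hCt]
        linarith
      exact hlt'.not_ge hcontra
    · simp only [QFin, if_neg hq't]
      set Q' := q'.toReal with hQ'def
      have hQ'0 : 0 < Q' := ENNReal.toReal_pos hq'0 hq't
      have hrQ' : r * Q' = 1 := by
        rw [hr_def, if_neg hq't, one_div, inv_mul_cancel₀ hQ'0.ne']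
      intro hfin
      have hc0 : (0:ℝ) < (1/2 : ℝ) ^ Q' := Real.rpow_pos_of_pos (by norm_num) _
      have hlow : ∀ ε ∈ Set.Ioo (3/4:ℝ) 1,
          ENNReal.ofReal ((1/2:ℝ) ^ Q') * ENNReal.ofReal ((1 - ε) ^ (-1:ℝ))
            ≤ ENNReal.ofReal (ε ^ (Q' * 0) / ε)
                * (ENNReal.ofReal (max (2*ε-1) 0 * (1-ε) ^ (-r))) ^ Q' := by
        intro ε hε
        have h1ε : 0 < 1 - ε := by linarith [hε.2]
        have hε0 : (0:ℝ) < ε := by linarith [hε.1]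
        have e1 : (1:ℝ) ≤ ε ^ (Q' * 0) / ε := by
          rw [mul_zero, Real.rpow_zero, le_div_iff₀ hε0, one_mul]
          linarith [hε.2]
        have e2 : (1/2:ℝ) * (1-ε) ^ (-r) ≤ max (2*ε-1) 0 * (1-ε) ^ (-r) :=
          mul_le_mul_of_nonneg_right (le_max_of_le_left (by linarith [hε.1]))
            (Real.rpow_nonneg h1ε.le _)
        calc ENNReal.ofReal ((1/2:ℝ) ^ Q') * ENNReal.ofReal ((1 - ε) ^ (-1:ℝ))
            = ENNReal.ofReal (((1/2:ℝ) * (1-ε) ^ (-r)) ^ Q') := by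
              rw [Real.mul_rpow (by norm_num) (Real.rpow_nonneg h1ε.le _),
                ← Real.rpow_mul h1ε.le, neg_mul, hrQ', ← ENNReal.ofReal_mul hc0.le]
          _ ≤ (ENNReal.ofReal (max (2*ε-1) 0 * (1-ε) ^ (-r))) ^ Q' := by
              rw [ENNReal.ofReal_rpow_of_nonneg
                (mul_nonneg (le_max_right _ _) (Real.rpow_nonneg h1ε.le _)) hQ'0.le]
              exact ENNReal.ofReal_le_ofReal
                (Real.rpow_le_rpow (by positivity) e2 hQ'0.le)
          _ ≤ ENNReal.ofReal (ε ^ (Q' * 0) / ε)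
                * (ENNReal.ofReal (max (2*ε-1) 0 * (1-ε) ^ (-r))) ^ Q' := by
              conv_lhs => rw [← one_mul ((ENNReal.ofReal (max (2*ε-1) 0 * (1-ε) ^ (-r))) ^ Q')]
              refine mul_le_mul' ?_ le_rfl
              rw [← ENNReal.ofReal_one]
              exact ENNReal.ofReal_le_ofReal e1
      have hkey : ∫⁻ ε in Set.Ioo (3/4:ℝ) 1,
          ENNReal.ofReal ((1/2:ℝ) ^ Q') * ENNReal.ofReal ((1 - ε) ^ (-1:ℝ)) < ⊤ := by
        refine lt_of_le_of_lt (le_trans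
          (MeasureTheory.setLIntegral_mono' measurableSet_Ioo hlow) ?_) hfin
        exact MeasureTheory.lintegral_mono_set fun x hx => ⟨by linarith [hx.1], hx.2⟩
      rw [MeasureTheory.lintegral_const_mul' _ _ ENNReal.ofReal_ne_top, aux_div,
        ENNReal.mul_top (ENNReal.ofReal_pos.mpr hc0).ne'] at hkey
      exact lt_irrefl _ hkey

end
end
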